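/- arXiv:1909.06565 — 2 statements merged into one kernel-verified Lean document; each statement's English description precedes it below -/
import Mathlib

section
/- For all reals k, l > 0, ∫₀^l ∫_{−x}^{l−x} H₀⁽¹⁾(k|x'|) dx' dx = (2/k²)·∫₀^{kl} 𝓘₀(u) du. -/
open MeasureTheory Set Filter Topology Real intervalIntegral

/-- Bessel function of the first kind `J_n(x)` (integral representation). -/
noncomputable def besselJ (n : ℕ) (x : ℝ) : ℝ :=
  (1 / π) * ∫ τ in (0:ℝ)..π, Real.cos (n * τ - x * Real.sin τ)

/-- Bessel function of the second kind `Y_n(x)` (integral representation). -/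
noncomputable def besselY (n : ℕ) (x : ℝ) : ℝ :=
  (1 / π) * (∫ τ in (0:ℝ)..π, Real.sin (x * Real.sin τ - n * τ))
    - (1 / π) * ∫ t in Set.Ioi (0:ℝ),
        (Real.exp (n * t) + (-1 : ℝ) ^ n * Real.exp (-(n * t))) * Real.exp (-x * Real.sinh t)

/-- Hankel function of the first kind `H_n^{(1)}(x) = J_n(x) + i Y_n(x)`. -/
noncomputable def hankelH1 (n : ℕ) (x : ℝ) : ℂ :=
  (besselJ n x : ℂ) + Complex.I * (besselY n x : ℂ)

/-- Struve function `𝐇₀(x)`. -/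
noncomputable def struveH0 (x : ℝ) : ℝ :=
  (2 / π) * ∫ t in (0:ℝ)..1, Real.sin (x * t) / Real.sqrt (1 - t ^ 2)

/-- Struve function `𝐇₁(x)`. -/
noncomputable def struveH1 (x : ℝ) : ℝ :=
  (2 * x / π) * ∫ t in (0:ℝ)..1, Real.sqrt (1 - t ^ 2) * Real.sin (x * t)

/-- Struve function `𝐇₋₁(x) = 2/π − 𝐇₁(x)`. -/
noncomputable def struveHm1 (x : ℝ) : ℝ := 2 / π - struveH1 x

/-- `𝓘₀(u) = ∫₀^u H₀⁽¹⁾(x) dx`. -/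
noncomputable def calI0 (u : ℝ) : ℂ := ∫ x in (0:ℝ)..u, hankelH1 0 x

lemma expSinh_prod_integrable {b : ℝ} (hb : 0 < b) :
    Integrable (fun p : ℝ × ℝ => Real.exp (-p.1 * Real.sinh p.2))
      ((volume.restrict (Set.Ioc 0 b)).prod (volume.restrict (Set.Ioi 0))) := by
  have hcont : Continuous fun p : ℝ × ℝ => Real.exp (-p.1 * Real.sinh p.2) := by fun_prop
  rw [MeasureTheory.integrable_prod_iff' hcont.aestronglyMeasurable]
  constructor
  · exact Filter.Eventually.of_forall fun t =>
      (Continuous.integrableOn_Ioc (by fun_prop))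
  · have hbound : Integrable (fun t : ℝ => if t ≤ 1 then b else 4 * Real.exp (-t))
        (volume.restrict (Set.Ioi (0:ℝ))) := by
      have h1 : IntegrableOn (fun t : ℝ => if t ≤ 1 then b else 4 * Real.exp (-t))
          (Set.Ioc (0:ℝ) 1) := by
        refine ((integrableOn_const_iff (C := b)).2 (Or.inr measure_Ioc_lt_top)).congr_fun
          (fun t ht => ?_) measurableSet_Ioc
        simp [if_pos ht.2]
      have h2 : IntegrableOn (fun t : ℝ => if t ≤ 1 then b else 4 * Real.exp (-t))
          (Set.Ioi (1:ℝ)) := by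
        have base : IntegrableOn (fun t : ℝ => 4 * Real.exp (-t)) (Set.Ioi (1:ℝ)) := by
          have := (exp_neg_integrableOn_Ioi 1 (one_pos)).const_mul (4:ℝ)
          simp only [neg_one_mul] at this; exact this
        exact base.congr_fun (fun t ht => by simp [if_neg (not_le.2 (mem_Ioi.1 ht))])
          measurableSet_Ioi
      have hu := h1.union h2
      rwa [Set.Ioc_union_Ioi_eq_Ioi zero_le_one] at hu
    apply Integrable.mono' hbound
    · have hc : Continuous fun t : ℝ => ∫ x in (0:ℝ)..b, Real.exp (-x * Real.sinh t) :=
        intervalIntegral.continuous_parametric_intervalIntegral_of_continuous' (by fun_prop) 0 b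
      have : (fun t : ℝ => ∫ x, ‖Real.exp (-x * Real.sinh t)‖ ∂(volume.restrict (Set.Ioc 0 b)))
          = fun t : ℝ => ∫ x in (0:ℝ)..b, Real.exp (-x * Real.sinh t) := by
        funext t
        rw [intervalIntegral.integral_of_le hb.le]
        congr 1; funext x
        rw [Real.norm_eq_abs, abs_of_pos (Real.exp_pos _)]
      rw [this]
      exact hc.aestronglyMeasurable
    · rw [ae_restrict_iff' measurableSet_Ioi]
      refine Filter.Eventually.of_forall fun t ht => ?_
      replace ht : (0:ℝ) < t := ht
      have hs : 0 < Real.sinh t := Real.sinh_pos_iff.2 ht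
      have hnn : 0 ≤ ∫ x in Set.Ioc (0:ℝ) b, ‖Real.exp (-x * Real.sinh t)‖ :=
        setIntegral_nonneg measurableSet_Ioc fun x _ => norm_nonneg _
      have heq : (fun x : ℝ => ‖Real.exp (-x * Real.sinh t)‖)
          = fun x => Real.exp (-(Real.sinh t * x)) := by
        funext x; rw [Real.norm_eq_abs, abs_of_pos (Real.exp_pos _)]; ring_nf
      rw [Real.norm_of_nonneg hnn, heq]
      by_cases h1 : t ≤ 1
      · rw [if_pos h1]
        calc ∫ x in Set.Ioc (0:ℝ) b, Real.exp (-(Real.sinh t * x))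
            ≤ ∫ _x in Set.Ioc (0:ℝ) b, (1:ℝ) := by
              apply setIntegral_mono_on
              · exact Continuous.integrableOn_Ioc (by fun_prop)
              · exact Continuous.integrableOn_Ioc (by fun_prop)
              · exact measurableSet_Ioc
              · intro x hx
                rw [Real.exp_le_one_iff]
                nlinarith [mul_pos hs hx.1]
          _ = b := by simp [Real.volume_Ioc, ENNReal.toReal_ofReal hb.le, hb.le]
      · rw [if_neg h1]
        push_neg at h1
        calc ∫ x in Set.Ioc (0:ℝ) b, Real.exp (-(Real.sinh t * x))
            ≤ ∫ x in Set.Ioi (0:ℝ), Real.exp (-(Real.sinh t * x)) := by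
              apply setIntegral_mono_set
              · simpa [neg_mul] using exp_neg_integrableOn_Ioi (0:ℝ) hs
              · exact Filter.Eventually.of_forall fun x => (Real.exp_pos _).le
              · exact HasSubset.Subset.eventuallyLE Set.Ioc_subset_Ioi_self
          _ = (Real.sinh t)⁻¹ := by
              rw [MeasureTheory.integral_comp_mul_left_Ioi (fun x => Real.exp (-x)) 0 hs]
              simp [integral_exp_neg_Ioi, integral_exp_Iic]
          _ ≤ 4 * Real.exp (-t) := by
              have hst : Real.exp t / 4 ≤ Real.sinh t := by
                rw [Real.sinh_eq]
                have ha : Real.exp (-t) ≤ Real.exp t * Real.exp (-2) := by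
                  rw [← Real.exp_add]; exact Real.exp_le_exp.2 (by linarith)
                have hb2 : Real.exp (-2 : ℝ) ≤ 1/2 := by
                  rw [Real.exp_neg, inv_le_comm₀ (Real.exp_pos _) (by norm_num)]
                  have := Real.add_one_le_exp (2:ℝ); linarith
                have h3 := Real.exp_pos t
                nlinarith
              have h4 : (0:ℝ) < Real.exp t / 4 := by positivity
              calc (Real.sinh t)⁻¹ ≤ (Real.exp t / 4)⁻¹ := inv_anti₀ h4 hst
                _ = 4 * Real.exp (-t) := by rw [Real.exp_neg]; field_simp

lemma hankel_integrableOn {b : ℝ} (hb : 0 < b) :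
    IntegrableOn (fun x => hankelH1 0 x) (Set.Ioc 0 b) := by
  have hJ : Continuous (besselJ 0) := by
    unfold besselJ
    exact continuous_const.mul
      (intervalIntegral.continuous_parametric_intervalIntegral_of_continuous' (by fun_prop) 0 π)
  have hY : IntegrableOn (besselY 0) (Set.Ioc 0 b) := by
    have hYeq : besselY 0 = fun x =>
        (1/π) * (∫ τ in (0:ℝ)..π, Real.sin (x * Real.sin τ - (0:ℕ) * τ))
        - (1/π) * (2 * ∫ t in Set.Ioi (0:ℝ), Real.exp (-x * Real.sinh t)) := by
      funext x
      unfold besselY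
      have h2 : (fun t : ℝ => (Real.exp ((0:ℕ) * t) + (-1:ℝ)^(0:ℕ) * Real.exp (-((0:ℕ) * t)))
          * Real.exp (-x * Real.sinh t)) = fun t => 2 * Real.exp (-x * Real.sinh t) := by
        funext t; norm_num
      rw [h2, MeasureTheory.integral_const_mul]
    rw [hYeq]
    apply Integrable.sub
    · apply Integrable.const_mul
      apply Continuous.integrableOn_Ioc
      exact intervalIntegral.continuous_parametric_intervalIntegral_of_continuous' (by fun_prop) 0 π
    · apply Integrable.const_mul
      exact ((expSinh_prod_integrable hb).integral_prod_left).const_mul 2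
  have : (fun x => hankelH1 0 x)
      = fun x => ((besselJ 0 x : ℂ)) + Complex.I * ((besselY 0 x : ℂ)) := rfl
  rw [this]
  exact ((hJ.integrableOn_Ioc).ofReal).add ((hY.ofReal).const_mul Complex.I)

/-- `∫₀^l ∫_{−x}^{l−x} H₀⁽¹⁾(k|x'|) dx' dx = (2/k²)·∫₀^{kl} 𝓘₀(u) du`. -/
theorem statement10 (k l : ℝ) (hk : 0 < k) (hl : 0 < l) :
    (∫ x in (0:ℝ)..l, ∫ x' in (-x)..(l - x), hankelH1 0 (k * |x'|))
      = (2 / (k : ℂ) ^ 2) * ∫ u in (0:ℝ)..(k * l), calI0 u := by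
  have hk' : (k:ℂ) ≠ 0 := Complex.ofReal_ne_zero.2 hk.ne'
  set F : ℝ → ℂ := fun c => ∫ t in (0:ℝ)..c, hankelH1 0 (k * t) with hF
  have hInt : ∀ b : ℝ, 0 ≤ b → IntervalIntegrable (hankelH1 0) volume 0 b := by
    intro b hb
    rw [intervalIntegrable_iff_integrableOn_Ioc_of_le hb]
    rcases hb.eq_or_lt with h | h
    · simp [← h]
    · exact hankel_integrableOn h
  have hIntk : ∀ b : ℝ, 0 ≤ b → IntervalIntegrable (fun t => hankelH1 0 (k * t)) volume 0 b := by
    intro b hb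
    have h := (hInt (k*b) (by positivity)).comp_mul_left (c := k)
    rwa [zero_div, mul_div_cancel_left₀ _ hk.ne'] at h
  -- inner integral
  have inner : ∀ x ∈ Icc (0:ℝ) l,
      (∫ x' in (-x)..(l - x), hankelH1 0 (k * |x'|)) = F x + F (l - x) := by
    intro x hx
    have hx0 := hx.1
    have hxl := hx.2
    have hlx : (0:ℝ) ≤ l - x := by linarith
    have i1 : IntervalIntegrable (fun x' => hankelH1 0 (k * |x'|)) volume (-x) 0 := by
      have base := (hIntk x hx0).comp_mul_left (c := -1)
      rw [intervalIntegrable_iff] at base ⊢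
      rw [Set.uIoc_of_le (neg_nonpos.2 hx0)]
      rw [zero_div, div_neg, div_one, Set.uIoc_comm, Set.uIoc_of_le (neg_nonpos.2 hx0)] at base
      refine base.congr_fun (fun y hy => ?_) measurableSet_Ioc
      rw [abs_of_nonpos hy.2]; simp only [neg_one_mul]
    have i2 : IntervalIntegrable (fun x' => hankelH1 0 (k * |x'|)) volume 0 (l - x) := by
      have base := hIntk (l - x) hlx
      rw [intervalIntegrable_iff] at base ⊢
      rw [Set.uIoc_of_le hlx] at base ⊢
      refine base.congr_fun (fun y hy => ?_) measurableSet_Ioc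
      rw [abs_of_nonneg hy.1.le]
    rw [← intervalIntegral.integral_add_adjacent_intervals i1 i2]
    congr 1
    · have e1 : Set.EqOn (fun x' => hankelH1 0 (k * |x'|))
          (fun x' => hankelH1 0 (k * -x')) (Set.uIcc (-x) 0) := by
        intro y hy
        rw [Set.uIcc_of_le (neg_nonpos.2 hx0)] at hy
        simp only
        rw [abs_of_nonpos hy.2]
      rw [intervalIntegral.integral_congr e1]
      have := intervalIntegral.integral_comp_neg (a := -x) (b := 0)
        (f := fun t => hankelH1 0 (k * t))
      simp only [neg_zero, neg_neg] at this
      rw [this]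
    · have e2 : Set.EqOn (fun x' => hankelH1 0 (k * |x'|))
          (fun x' => hankelH1 0 (k * x')) (Set.uIcc 0 (l - x)) := by
        intro y hy
        rw [Set.uIcc_of_le hlx] at hy
        simp only
        rw [abs_of_nonneg hy.1]
      rw [intervalIntegral.integral_congr e2]
  -- continuity / integrability of F
  have hFk_int : IntegrableOn (fun t => hankelH1 0 (k * t)) (Set.uIcc 0 l) := by
    rw [Set.uIcc_of_le hl.le]
    have h := hIntk l hl.le
    rw [intervalIntegrable_iff_integrableOn_Ioc_of_le hl.le] at h
    exact h.congr_set_ae Ioc_ae_eq_Icc.symm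
  have hFcont : ContinuousOn F (Set.uIcc 0 l) :=
    intervalIntegral.continuousOn_primitive_interval hFk_int
  have hF_ii : IntervalIntegrable F volume 0 l := hFcont.intervalIntegrable
  have hFl_ii : IntervalIntegrable (fun x => F (l - x)) volume 0 l := by
    apply ContinuousOn.intervalIntegrable
    apply hFcont.comp ((continuous_const.sub continuous_id).continuousOn)
    intro y hy
    rw [Set.uIcc_of_le hl.le] at hy ⊢
    exact ⟨by simp; linarith [hy.2], by simp; linarith [hy.1]⟩
  have hFval : ∀ c : ℝ, F c = (k:ℂ)⁻¹ * calI0 (k * c) := by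
    intro c
    rw [hF]
    simp only
    rw [intervalIntegral.integral_comp_mul_left (fun u => hankelH1 0 u) hk.ne']
    rw [mul_zero]
    rw [calI0]
    rw [Complex.real_smul, Complex.ofReal_inv]
  calc (∫ x in (0:ℝ)..l, ∫ x' in (-x)..(l - x), hankelH1 0 (k * |x'|))
      = ∫ x in (0:ℝ)..l, (F x + F (l - x)) := by
        apply intervalIntegral.integral_congr
        intro x hx
        rw [Set.uIcc_of_le hl.le] at hx
        exact inner x hx
    _ = (∫ x in (0:ℝ)..l, F x) + ∫ x in (0:ℝ)..l, F (l - x) :=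
        intervalIntegral.integral_add hF_ii hFl_ii
    _ = (2:ℂ) * ∫ x in (0:ℝ)..l, F x := by
        rw [intervalIntegral.integral_comp_sub_left F l]
        simp only [sub_self, sub_zero]
        ring
    _ = (2:ℂ) * ((k:ℂ)⁻¹ * ∫ x in (0:ℝ)..l, calI0 (k * x)) := by
        rw [show (fun x => F x) = fun x => (k:ℂ)⁻¹ * calI0 (k * x) from funext hFval]
        rw [intervalIntegral.integral_const_mul]
    _ = (2:ℂ) * ((k:ℂ)⁻¹ * ((k:ℂ)⁻¹ * ∫ u in (0:ℝ)..(k*l), calI0 u)) := by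
        rw [intervalIntegral.integral_comp_mul_left (fun u => calI0 u) hk.ne']
        rw [mul_zero, Complex.real_smul, Complex.ofReal_inv]
    _ = (2 / (k : ℂ) ^ 2) * ∫ u in (0:ℝ)..(k * l), calI0 u := by
        rw [sq, div_mul_eq_mul_div, mul_div_assoc, div_eq_mul_inv, mul_inv]
        ring
end

section
/- For all reals k, l > 0 and every ε with 0 < ε < l/2, ∫_ε^{l−ε} Υ_β(x) dx = (1/k²)·[H₀⁽¹⁾(kε) − H₀⁽¹⁾(k(l−ε))], and moreover ∫_ε^{l−ε} Υ_γ(x) dx = ∫_ε^{l−ε} Υ_β(x) dx. -/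
open MeasureTheory Set Filter Topology Real intervalIntegral

/-- `Υ_α(x) = (1/k)·[H₁⁽¹⁾(kx) + H₁⁽¹⁾(k(l−x))]`. -/
noncomputable def upsAlpha (k l x : ℝ) : ℂ :=
  ((1 / k : ℝ) : ℂ) * (hankelH1 1 (k * x) + hankelH1 1 (k * (l - x)))

/-- `Υ_β(x) = (x/l)·Υ_α(x)`. -/
noncomputable def upsBeta (k l x : ℝ) : ℂ := ((x / l : ℝ) : ℂ) * upsAlpha k l x

/-- `Υ_γ(x) = Υ_β(x) + (1/(k²l))·[k(l−x)·H₁⁽¹⁾(k(l−x)) − kx·H₁⁽¹⁾(kx)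
  + H₀⁽¹⁾(k(l−x)) − H₀⁽¹⁾(kx)]`. -/
noncomputable def upsGamma (k l x : ℝ) : ℂ :=
  upsBeta k l x + ((1 / (k ^ 2 * l) : ℝ) : ℂ) *
    (((k * (l - x) : ℝ) : ℂ) * hankelH1 1 (k * (l - x))
      - ((k * x : ℝ) : ℂ) * hankelH1 1 (k * x)
      + hankelH1 0 (k * (l - x)) - hankelH1 0 (k * x))

/-- `Υ_δ(x) = (x/l)·Υ_γ(x)`. -/
noncomputable def upsDelta (k l x : ℝ) : ℂ := ((x / l : ℝ) : ℂ) * upsGamma k l x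


lemma sinh_ge_sq {t : ℝ} (ht : 0 ≤ t) : t^2/8 ≤ Real.sinh t := by
  have h1 : (1 + t/2) ≤ Real.exp (t/2) := by
    have := Real.add_one_le_exp (t/2); linarith
  have h2 : (1 + t/2)^2 ≤ Real.exp t := by
    calc (1 + t/2)^2 ≤ (Real.exp (t/2))^2 := by
          apply pow_le_pow_left₀ (by linarith) h1
      _ = Real.exp t := by rw [sq, ← Real.exp_add]; ring_nf
  have h3 : Real.exp (-t) ≤ 1 := Real.exp_le_one_iff.2 (by linarith)
  rw [Real.sinh_eq]
  nlinarith

lemma exp_bound_aux {c A t : ℝ} (hc : 0 < c) (hA : 0 ≤ A) (ht : 0 ≤ t) :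
    Real.exp (A*t) * Real.exp (-c * Real.sinh t) ≤ Real.exp (2*(A+1)^2/c) * Real.exp (-t) := by
  rw [← Real.exp_add, ← Real.exp_add]
  apply Real.exp_le_exp.2
  have hs := sinh_ge_sq ht
  have key : A*t - c * Real.sinh t + t ≤ 2*(A+1)^2/c := by
    rw [le_div_iff₀ hc]
    nlinarith [sq_nonneg (c*t - 4*(A+1)), mul_le_mul_of_nonneg_left hs (mul_pos hc hc).le]
  linarith

lemma integrable_exp_sinh {c : ℝ} (A : ℝ) (hc : 0 < c) (hA : 0 ≤ A) :
    IntegrableOn (fun t => Real.exp (A*t) * Real.exp (-c * Real.sinh t)) (Ioi 0) := by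
  have hg : IntegrableOn (fun t => Real.exp (2*(A+1)^2/c) * Real.exp (-(1:ℝ)*t)) (Ioi 0) :=
    (exp_neg_integrableOn_Ioi 0 one_pos).const_mul _
  refine hg.mono' ?_ ?_
  · exact ((Real.continuous_exp.comp (continuous_const.mul continuous_id)).mul
      (Real.continuous_exp.comp (continuous_const.mul Real.continuous_sinh))).aestronglyMeasurable
  · rw [ae_restrict_iff' measurableSet_Ioi]
    filter_upwards with t ht
    have ht' : (0:ℝ) ≤ t := le_of_lt ht
    have := exp_bound_aux hc hA ht'
    rw [Real.norm_eq_abs, abs_of_pos (by positivity)]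
    simpa using this

lemma integrable_sinh_exp {c : ℝ} (A : ℝ) (hc : 0 < c) (hA : 0 ≤ A) :
    IntegrableOn (fun t => Real.sinh t * (Real.exp (A*t) * Real.exp (-c * Real.sinh t))) (Ioi 0) := by
  refine (integrable_exp_sinh (A+1) hc (by linarith)).mono' ?_ ?_
  · exact (Real.continuous_sinh.mul ((Real.continuous_exp.comp (continuous_const.mul continuous_id)).mul
      (Real.continuous_exp.comp (continuous_const.mul Real.continuous_sinh)))).aestronglyMeasurable
  · rw [ae_restrict_iff' measurableSet_Ioi]
    filter_upwards with t ht
    have ht' : (0:ℝ) ≤ t := le_of_lt ht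
    have h1 : Real.sinh t ≤ Real.exp t := by
      rw [Real.sinh_eq]
      have := Real.exp_pos (-t)
      have := Real.exp_pos t
      linarith
    have h0 : 0 ≤ Real.sinh t := by
      rw [Real.sinh_eq]
      have : Real.exp (-t) ≤ Real.exp t := Real.exp_le_exp.2 (by linarith)
      linarith
    rw [Real.norm_eq_abs, abs_of_nonneg (by positivity)]
    have : (A+1)*t = A*t + t := by ring
    rw [this, Real.exp_add]
    have he := (Real.exp_pos (A*t)).le
    have hee := (Real.exp_pos (-c*Real.sinh t)).le
    calc Real.sinh t * (Real.exp (A*t) * Real.exp (-c*Real.sinh t))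
        ≤ Real.exp t * (Real.exp (A*t) * Real.exp (-c*Real.sinh t)) := by
          apply mul_le_mul_of_nonneg_right h1 (by positivity)
      _ = Real.exp (A*t) * Real.exp t * Real.exp (-c*Real.sinh t) := by ring

lemma hasDerivAt_besselJ (n : ℕ) (x : ℝ) :
    HasDerivAt (besselJ n)
      ((1/π) * ∫ τ in (0:ℝ)..π, Real.sin τ * Real.sin (n * τ - x * Real.sin τ)) x := by
  have key := intervalIntegral.hasDerivAt_integral_of_dominated_loc_of_deriv_le
    (μ := volume) (F := fun x τ => Real.cos (n * τ - x * Real.sin τ))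
    (F' := fun x τ => Real.sin τ * Real.sin (n * τ - x * Real.sin τ))
    (x₀ := x) (bound := fun _ => 1) (a := 0) (b := π) (s := Metric.ball x 1) (Metric.ball_mem_nhds x one_pos)
    (Filter.Eventually.of_forall fun y =>
      ((Real.continuous_cos.comp (by fun_prop)).aestronglyMeasurable))
    ((Real.continuous_cos.comp (by fun_prop)).intervalIntegrable _ _)
    ((continuous_sin.mul (Real.continuous_sin.comp (by fun_prop))).aestronglyMeasurable)
    (Filter.Eventually.of_forall fun τ _ y _ => by
      rw [Real.norm_eq_abs, abs_mul]
      calc |Real.sin τ| * |Real.sin (n * τ - y * Real.sin τ)| ≤ 1 * 1 := by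
            apply mul_le_mul (Real.abs_sin_le_one τ) (Real.abs_sin_le_one _)
              (abs_nonneg _) zero_le_one
        _ = 1 := by ring)
    (intervalIntegrable_const)
    (Filter.Eventually.of_forall fun τ _ y _ => by
      have h : HasDerivAt (fun y : ℝ => (n:ℝ) * τ - y * Real.sin τ) (-Real.sin τ) y := by
        simpa using (hasDerivAt_mul_const (Real.sin τ)).const_sub ((n:ℝ)*τ)
      have := h.cos
      exact this.congr_deriv (by ring))
  have := key.2.const_mul (1/π)
  exact this

lemma norm_Ycoef_le (n : ℕ) {t : ℝ} (ht : 0 ≤ t) :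
    |Real.exp (n * t) + (-1:ℝ)^n * Real.exp (-(n * t))| ≤ 2 * Real.exp (n * t) := by
  have h1 : Real.exp (-((n:ℝ)*t)) ≤ Real.exp ((n:ℝ)*t) :=
    Real.exp_le_exp.2 (neg_le_self (mul_nonneg (Nat.cast_nonneg n) ht))
  have h2 : |(-1:ℝ)^n * Real.exp (-(n * t))| = Real.exp (-(n * t)) := by
    rw [abs_mul, abs_pow, abs_neg, abs_one, one_pow, one_mul,
      abs_of_pos (Real.exp_pos _)]
  calc |Real.exp (n * t) + (-1:ℝ)^n * Real.exp (-(n * t))|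
      ≤ |Real.exp (n * t)| + |(-1:ℝ)^n * Real.exp (-(n * t))| := abs_add_le _ _
    _ = Real.exp (n * t) + Real.exp (-(n * t)) := by
        rw [h2, abs_of_pos (Real.exp_pos _)]
    _ ≤ 2 * Real.exp (n * t) := by linarith

lemma integrableY (n : ℕ) {x : ℝ} (hx : 0 < x) :
    IntegrableOn (fun t => (Real.exp (n * t) + (-1:ℝ)^n * Real.exp (-(n * t)))
      * Real.exp (-x * Real.sinh t)) (Set.Ioi (0:ℝ)) := by
  refine ((integrable_exp_sinh (c := x) (n:ℝ) hx (Nat.cast_nonneg n)).const_mul 2).mono' ?_ ?_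
  · exact (((Real.continuous_exp.comp (by fun_prop)).add
      (continuous_const.mul (Real.continuous_exp.comp (by fun_prop)))).mul
      (Real.continuous_exp.comp (continuous_const.mul Real.continuous_sinh))).aestronglyMeasurable
  · rw [ae_restrict_iff' measurableSet_Ioi]
    filter_upwards with t ht
    have ht' : (0:ℝ) ≤ t := le_of_lt ht
    rw [Real.norm_eq_abs, abs_mul, abs_of_pos (Real.exp_pos _)]
    have := norm_Ycoef_le n ht'
    have hp := (Real.exp_pos (-x * Real.sinh t)).le
    calc |Real.exp (n * t) + (-1:ℝ)^n * Real.exp (-(n * t))| * Real.exp (-x * Real.sinh t)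
        ≤ (2 * Real.exp (n * t)) * Real.exp (-x * Real.sinh t) :=
          mul_le_mul_of_nonneg_right this hp
      _ = 2 * (Real.exp ((n:ℝ) * t) * Real.exp (-x * Real.sinh t)) := by ring

lemma hasDerivAt_Yint (n : ℕ) {x : ℝ} (hx : 0 < x) :
    HasDerivAt (fun x => ∫ t in Set.Ioi (0:ℝ),
        (Real.exp (n * t) + (-1:ℝ)^n * Real.exp (-(n * t))) * Real.exp (-x * Real.sinh t))
      (∫ t in Set.Ioi (0:ℝ), (Real.exp (n * t) + (-1:ℝ)^n * Real.exp (-(n * t)))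
        * (Real.exp (-x * Real.sinh t) * (-Real.sinh t))) x := by
  have key := _root_.hasDerivAt_integral_of_dominated_loc_of_deriv_le
    (μ := volume.restrict (Set.Ioi (0:ℝ)))
    (F := fun x t => (Real.exp (n * t) + (-1:ℝ)^n * Real.exp (-(n * t))) * Real.exp (-x * Real.sinh t))
    (F' := fun x t => (Real.exp (n * t) + (-1:ℝ)^n * Real.exp (-(n * t)))
        * (Real.exp (-x * Real.sinh t) * (-Real.sinh t)))
    (x₀ := x) (s := Metric.ball x (x/2))
    (bound := fun t => 2 * (Real.sinh t * (Real.exp ((n:ℝ)*t) * Real.exp (-(x/2) * Real.sinh t))))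
    (Metric.ball_mem_nhds x (by positivity))
    (Filter.Eventually.of_forall fun y =>
      (((Real.continuous_exp.comp (by fun_prop)).add
        (continuous_const.mul (Real.continuous_exp.comp (by fun_prop)))).mul
        (Real.continuous_exp.comp (continuous_const.mul Real.continuous_sinh))).aestronglyMeasurable)
    (integrableY n hx)
    ((((Real.continuous_exp.comp (by fun_prop)).add
        (continuous_const.mul (Real.continuous_exp.comp (by fun_prop)))).mul
        ((Real.continuous_exp.comp (continuous_const.mul Real.continuous_sinh)).mul
          Real.continuous_sinh.neg)).aestronglyMeasurable)
    ?_
    (((integrable_sinh_exp (c := x/2) (n:ℝ) (by positivity) (Nat.cast_nonneg n))).const_mul 2)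
    ?_
  · exact key.2
  · -- bound
    rw [ae_restrict_iff' measurableSet_Ioi]
    filter_upwards with t ht y hy
    have ht' : (0:ℝ) ≤ t := le_of_lt ht
    have hsh : 0 ≤ Real.sinh t := by
      rw [Real.sinh_eq]
      have : Real.exp (-t) ≤ Real.exp t := Real.exp_le_exp.2 (by linarith)
      linarith
    have hy2 : x/2 ≤ y := by
      rw [Metric.mem_ball, Real.dist_eq, abs_lt] at hy
      linarith
    have hmono : Real.exp (-y * Real.sinh t) ≤ Real.exp (-(x/2) * Real.sinh t) :=
      Real.exp_le_exp.2 (by nlinarith)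
    rw [Real.norm_eq_abs, abs_mul, abs_mul, abs_neg,
      abs_of_pos (Real.exp_pos _), abs_of_nonneg hsh]
    have h1 := norm_Ycoef_le n ht'
    have hp : (0:ℝ) ≤ Real.exp (-y * Real.sinh t) * Real.sinh t := by positivity
    calc |Real.exp (n * t) + (-1:ℝ)^n * Real.exp (-(n * t))| * (Real.exp (-y * Real.sinh t) * Real.sinh t)
        ≤ (2 * Real.exp (n * t)) * (Real.exp (-y * Real.sinh t) * Real.sinh t) :=
          mul_le_mul_of_nonneg_right h1 hp
      _ ≤ (2 * Real.exp (n * t)) * (Real.exp (-(x/2) * Real.sinh t) * Real.sinh t) := by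
          apply mul_le_mul_of_nonneg_left _ (by positivity)
          exact mul_le_mul_of_nonneg_right hmono hsh
      _ = 2 * (Real.sinh t * (Real.exp ((n:ℝ)*t) * Real.exp (-(x/2) * Real.sinh t))) := by ring
  · -- differentiability
    rw [ae_restrict_iff' measurableSet_Ioi]
    filter_upwards with t _ y _
    have h : HasDerivAt (fun y : ℝ => -y * Real.sinh t) (-Real.sinh t) y := by
      exact ((hasDerivAt_id y).neg.mul_const (Real.sinh t)).congr_deriv (by ring)
    exact (h.exp).const_mul _

lemma hasDerivAt_besselY (n : ℕ) {x : ℝ} (hx : 0 < x) :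
    HasDerivAt (besselY n)
      ((1/π) * (∫ τ in (0:ℝ)..π, Real.sin τ * Real.cos (x * Real.sin τ - n * τ))
        - (1/π) * ∫ t in Set.Ioi (0:ℝ), (Real.exp (n * t) + (-1:ℝ)^n * Real.exp (-(n * t)))
            * (Real.exp (-x * Real.sinh t) * (-Real.sinh t))) x := by
  have key1 := intervalIntegral.hasDerivAt_integral_of_dominated_loc_of_deriv_le
    (μ := volume) (F := fun x τ => Real.sin (x * Real.sin τ - n * τ))
    (F' := fun x τ => Real.sin τ * Real.cos (x * Real.sin τ - n * τ))
    (x₀ := x) (bound := fun _ => 1) (a := 0) (b := π) (s := Metric.ball x 1) (Metric.ball_mem_nhds x one_pos)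
    (Filter.Eventually.of_forall fun y =>
      ((Real.continuous_sin.comp (by fun_prop)).aestronglyMeasurable))
    ((Real.continuous_sin.comp (by fun_prop)).intervalIntegrable _ _)
    ((continuous_sin.mul (Real.continuous_cos.comp (by fun_prop))).aestronglyMeasurable)
    (Filter.Eventually.of_forall fun τ _ y _ => by
      rw [Real.norm_eq_abs, abs_mul]
      calc |Real.sin τ| * |Real.cos (y * Real.sin τ - n * τ)| ≤ 1 * 1 :=
            mul_le_mul (Real.abs_sin_le_one τ) (Real.abs_cos_le_one _)
              (abs_nonneg _) zero_le_one
        _ = 1 := by ring)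
    (intervalIntegrable_const)
    (Filter.Eventually.of_forall fun τ _ y _ => by
      have h : HasDerivAt (fun y : ℝ => y * Real.sin τ - (n:ℝ) * τ) (Real.sin τ) y := by
        simpa using (hasDerivAt_mul_const (Real.sin τ)).sub_const ((n:ℝ)*τ)
      have := h.sin
      exact this.congr_deriv (by ring))
  have key2 := hasDerivAt_Yint n hx
  exact (key1.2.const_mul (1/π)).sub (key2.const_mul (1/π))

-- ∫₀^π cos τ * cos (x sin τ) = 0
lemma int_coscos {x : ℝ} (hx : x ≠ 0) :
    ∫ τ in (0:ℝ)..π, Real.cos τ * Real.cos (x * Real.sin τ) = 0 := by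
  have hder : ∀ τ ∈ uIcc (0:ℝ) π,
      HasDerivAt (fun τ => Real.sin (x * Real.sin τ) / x)
        (Real.cos τ * Real.cos (x * Real.sin τ)) τ := by
    intro τ _
    have h1 : HasDerivAt (fun τ : ℝ => x * Real.sin τ) (x * Real.cos τ) τ :=
      (Real.hasDerivAt_sin τ).const_mul x
    have h2 := (h1.sin).div_const x
    exact h2.congr_deriv (by field_simp)
  rw [intervalIntegral.integral_eq_sub_of_hasDerivAt hder
    ((Real.continuous_cos.mul (Real.continuous_cos.comp (by fun_prop))).intervalIntegrable _ _)]
  simp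

-- ∫₀^π cos τ * sin (x sin τ) = 0
lemma int_cossin {x : ℝ} (hx : x ≠ 0) :
    ∫ τ in (0:ℝ)..π, Real.cos τ * Real.sin (x * Real.sin τ) = 0 := by
  have hder : ∀ τ ∈ uIcc (0:ℝ) π,
      HasDerivAt (fun τ => -Real.cos (x * Real.sin τ) / x)
        (Real.cos τ * Real.sin (x * Real.sin τ)) τ := by
    intro τ _
    have h1 : HasDerivAt (fun τ : ℝ => x * Real.sin τ) (x * Real.cos τ) τ :=
      (Real.hasDerivAt_sin τ).const_mul x
    have h2 := ((h1.cos).neg).div_const x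
    exact h2.congr_deriv (by field_simp)
  rw [intervalIntegral.integral_eq_sub_of_hasDerivAt hder
    ((Real.continuous_cos.mul (Real.continuous_sin.comp (by fun_prop))).intervalIntegrable _ _)]
  simp

lemma besselJ_deriv {x : ℝ} (hx : 0 < x) : HasDerivAt (besselJ 0) (-besselJ 1 x) x := by
  have h := hasDerivAt_besselJ 0 x
  convert h using 1
  simp only [besselJ]
  have i1 : IntervalIntegrable (fun τ => Real.cos τ * Real.cos (x * Real.sin τ)) volume 0 π :=
    (Real.continuous_cos.mul (Real.continuous_cos.comp (by fun_prop))).intervalIntegrable _ _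
  have i2 : IntervalIntegrable (fun τ => Real.sin τ * Real.sin (x * Real.sin τ)) volume 0 π :=
    (Real.continuous_sin.mul (Real.continuous_sin.comp (by fun_prop))).intervalIntegrable _ _
  have hsplit : (∫ τ in (0:ℝ)..π, Real.cos ((1:ℕ) * τ - x * Real.sin τ))
      = (∫ τ in (0:ℝ)..π, Real.cos τ * Real.cos (x * Real.sin τ))
        + ∫ τ in (0:ℝ)..π, Real.sin τ * Real.sin (x * Real.sin τ) := by
    rw [← intervalIntegral.integral_add i1 i2]
    apply intervalIntegral.integral_congr
    intro τ _
    simp [Real.cos_sub]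
  have h2 : (∫ τ in (0:ℝ)..π, Real.sin τ * Real.sin ((0:ℕ) * τ - x * Real.sin τ))
      = -∫ τ in (0:ℝ)..π, Real.sin τ * Real.sin (x * Real.sin τ) := by
    rw [← intervalIntegral.integral_neg]
    apply intervalIntegral.integral_congr
    intro τ _
    simp [Real.sin_neg]
  push_cast at hsplit h2 ⊢
  rw [hsplit, int_coscos hx.ne', h2]
  ring

lemma besselY_deriv {x : ℝ} (hx : 0 < x) : HasDerivAt (besselY 0) (-besselY 1 x) x := by
  have h := hasDerivAt_besselY 0 hx
  convert h using 1
  simp only [besselY]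
  have i1 : IntervalIntegrable (fun τ => Real.cos τ * Real.sin (x * Real.sin τ)) volume 0 π :=
    (Real.continuous_cos.mul (Real.continuous_sin.comp (by fun_prop))).intervalIntegrable _ _
  have i2 : IntervalIntegrable (fun τ => Real.sin τ * Real.cos (x * Real.sin τ)) volume 0 π :=
    (Real.continuous_sin.mul (Real.continuous_cos.comp (by fun_prop))).intervalIntegrable _ _
  have hsplit : (∫ τ in (0:ℝ)..π, Real.sin (x * Real.sin τ - (1:ℕ) * τ))
      = (∫ τ in (0:ℝ)..π, Real.cos τ * Real.sin (x * Real.sin τ))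
        - ∫ τ in (0:ℝ)..π, Real.sin τ * Real.cos (x * Real.sin τ) := by
    rw [← intervalIntegral.integral_sub i1 i2]
    apply intervalIntegral.integral_congr
    intro τ _
    simp [Real.sin_sub]
    ring
  have h2 : (∫ τ in (0:ℝ)..π, Real.sin τ * Real.cos (x * Real.sin τ - (0:ℕ) * τ))
      = ∫ τ in (0:ℝ)..π, Real.sin τ * Real.cos (x * Real.sin τ) := by
    apply intervalIntegral.integral_congr
    intro τ _
    norm_num
  have h3 : (∫ t in Set.Ioi (0:ℝ), (Real.exp ((1:ℕ) * t) + (-1:ℝ)^(1:ℕ) * Real.exp (-((1:ℕ) * t)))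
        * Real.exp (-x * Real.sinh t))
      = -∫ t in Set.Ioi (0:ℝ), (Real.exp ((0:ℕ) * t) + (-1:ℝ)^(0:ℕ) * Real.exp (-((0:ℕ) * t)))
        * (Real.exp (-x * Real.sinh t) * (-Real.sinh t)) := by
    rw [← MeasureTheory.integral_neg]
    apply MeasureTheory.integral_congr_ae
    filter_upwards with t
    simp [Real.sinh_eq]
    ring
  push_cast at hsplit h2 h3 ⊢
  rw [hsplit, int_cossin hx.ne', h2, h3]
  ring

lemma hasDerivAt_hankel0 {x : ℝ} (hx : 0 < x) :
    HasDerivAt (fun y => hankelH1 0 y) (-(hankelH1 1 x)) x := by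
  have hJ := (besselJ_deriv hx).ofReal_comp
  have hY := ((besselY_deriv hx).ofReal_comp).const_mul Complex.I
  have h := hJ.add hY
  have : HasDerivAt (fun y : ℝ => ((besselJ 0 y : ℂ) + Complex.I * (besselY 0 y : ℂ)))
      (-(hankelH1 1 x)) x := by
    exact h.congr_deriv (by simp [hankelH1]; ring)
  exact this

lemma continuousAt_hankel (n : ℕ) {y : ℝ} (hy : 0 < y) :
    ContinuousAt (fun x => hankelH1 n x) y := by
  have hJ := (hasDerivAt_besselJ n y).continuousAt
  have hY := (hasDerivAt_besselY n hy).continuousAt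
  exact (Complex.continuous_ofReal.continuousAt.comp hJ).add
    (continuousAt_const.mul (Complex.continuous_ofReal.continuousAt.comp hY))

lemma contOn_H (n : ℕ) {g : ℝ → ℝ} (hg : Continuous g) {s : Set ℝ} (hs : ∀ x ∈ s, 0 < g x) :
    ContinuousOn (fun x => hankelH1 n (g x)) s := fun x hx =>
  ((continuousAt_hankel n (hs x hx)).comp hg.continuousAt).continuousWithinAt

/-- `∫_ε^{l−ε} Υ_β(x) dx = (1/k²)·[H₀⁽¹⁾(kε) − H₀⁽¹⁾(k(l−ε))]` and
`∫_ε^{l−ε} Υ_γ(x) dx = ∫_ε^{l−ε} Υ_β(x) dx`. -/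
theorem statement15 (k l ε : ℝ) (hk : 0 < k) (hl : 0 < l) (hε : 0 < ε) (hεl : ε < l / 2) :
    (∫ x in ε..(l - ε), upsBeta k l x
      = (1 / (k : ℂ) ^ 2) * (hankelH1 0 (k * ε) - hankelH1 0 (k * (l - ε)))) ∧
    (∫ x in ε..(l - ε), upsGamma k l x = ∫ x in ε..(l - ε), upsBeta k l x) := by
  have hb : ε < l - ε := by linarith
  have hk0 : (k:ℂ) ≠ 0 := Complex.ofReal_ne_zero.2 hk.ne'
  have hl0 : (l:ℂ) ≠ 0 := Complex.ofReal_ne_zero.2 hl.ne'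
  have hsub : ∀ f : ℝ → ℂ, (∫ x in ε..(l-ε), f (l - x)) = ∫ x in ε..(l-ε), f x := by
    intro f
    rw [intervalIntegral.integral_comp_sub_left f l, sub_sub_cancel]
  have hH : ∀ n : ℕ, ContinuousOn (fun x => hankelH1 n (k*x)) (Set.uIcc ε (l-ε)) := by
    intro n
    rw [Set.uIcc_of_le hb.le]
    apply contOn_H n (by fun_prop)
    intro x hx
    exact mul_pos hk (lt_of_lt_of_le hε hx.1)
  have hH' : ∀ n : ℕ, ContinuousOn (fun x => hankelH1 n (k*(l-x))) (Set.uIcc ε (l-ε)) := by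
    intro n
    rw [Set.uIcc_of_le hb.le]
    apply contOn_H n (by fun_prop)
    intro x hx
    have h2 := hx.2
    exact mul_pos hk (by linarith)
  have ftc1 : (∫ x in ε..(l-ε), hankelH1 1 (k*x))
      = (1/(k:ℂ)) * (hankelH1 0 (k*ε) - hankelH1 0 (k*(l-ε))) := by
    have hder : ∀ x ∈ Set.uIcc ε (l-ε),
        HasDerivAt (fun x => -(1/(k:ℂ)) * hankelH1 0 (k*x)) (hankelH1 1 (k*x)) x := by
      intro x hx
      rw [Set.uIcc_of_le hb.le] at hx
      have hx0 : 0 < k*x := mul_pos hk (lt_of_lt_of_le hε hx.1)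
      have hin : HasDerivAt (fun x : ℝ => k * x) k x := by
        simpa using (hasDerivAt_id x).const_mul k
      have h := ((hasDerivAt_hankel0 hx0).scomp x hin).const_mul (-(1/(k:ℂ)))
      exact h.congr_deriv (by rw [Complex.real_smul]; field_simp)
    rw [intervalIntegral.integral_eq_sub_of_hasDerivAt hder ((hH 1).intervalIntegrable)]
    ring
  have ftc2 : (∫ x in ε..(l-ε), hankelH1 1 (k*(l-x)))
      = (1/(k:ℂ)) * (hankelH1 0 (k*ε) - hankelH1 0 (k*(l-ε))) := by
    rw [hsub (fun y => hankelH1 1 (k*y))]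
    exact ftc1
  -- Part 1
  have hBcont : ContinuousOn (fun x => upsBeta k l x) (Set.uIcc ε (l-ε)) := by
    unfold upsBeta upsAlpha
    exact ((Complex.continuous_ofReal.comp (continuous_id.div_const l)).continuousOn).mul
      (continuousOn_const.mul ((hH 1).add (hH' 1)))
  have hB'cont : ContinuousOn (fun x => upsBeta k l (l - x)) (Set.uIcc ε (l-ε)) := by
    apply hBcont.comp ((continuous_const.sub continuous_id).continuousOn)
    rw [Set.uIcc_of_le hb.le]
    intro x hx
    rw [Set.mem_Icc] at hx
    simp only [id_eq, Set.mem_Icc, Pi.sub_apply]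
    exact ⟨by linarith [hx.2], by linarith [hx.1]⟩
  have hint1 : IntervalIntegrable (fun x => upsBeta k l x) volume ε (l-ε) :=
    hBcont.intervalIntegrable
  have hint2 : IntervalIntegrable (fun x => upsBeta k l (l - x)) volume ε (l-ε) :=
    hB'cont.intervalIntegrable
  have hptwise : ∀ x : ℝ, upsBeta k l x + upsBeta k l (l-x)
      = ((1/k : ℝ):ℂ) * (hankelH1 1 (k*x) + hankelH1 1 (k*(l-x))) := by
    intro x
    unfold upsBeta upsAlpha
    rw [sub_sub_cancel]
    push_cast
    field_simp
    ring
  have hval : (∫ x in ε..(l-ε), (upsBeta k l x + upsBeta k l (l-x)))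
      = (2/(k:ℂ)^2) * (hankelH1 0 (k*ε) - hankelH1 0 (k*(l-ε))) := by
    rw [intervalIntegral.integral_congr (g := fun x => ((1/k : ℝ):ℂ)
        * (hankelH1 1 (k*x) + hankelH1 1 (k*(l-x)))) (fun x _ => hptwise x)]
    rw [intervalIntegral.integral_const_mul,
      intervalIntegral.integral_add ((hH 1).intervalIntegrable) ((hH' 1).intervalIntegrable),
      ftc1, ftc2]
    push_cast
    field_simp
    ring
  have hsumsplit := intervalIntegral.integral_add hint1 hint2
  have hswap : (∫ x in ε..(l-ε), upsBeta k l (l - x)) = ∫ x in ε..(l-ε), upsBeta k l x :=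
    hsub (fun y => upsBeta k l y)
  have part1 : (∫ x in ε..(l - ε), upsBeta k l x)
      = (1 / (k : ℂ) ^ 2) * (hankelH1 0 (k * ε) - hankelH1 0 (k * (l - ε))) := by
    have h2 : (2:ℂ) * ∫ x in ε..(l-ε), upsBeta k l x
        = (2/(k:ℂ)^2) * (hankelH1 0 (k*ε) - hankelH1 0 (k*(l-ε))) := by
      rw [← hval, hsumsplit, hswap]; ring
    linear_combination h2 / 2
  refine ⟨part1, ?_⟩
  -- Part 2
  set G : ℝ → ℂ := fun x => ((1 / (k ^ 2 * l) : ℝ) : ℂ) *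
    (((k * (l - x) : ℝ) : ℂ) * hankelH1 1 (k * (l - x))
      - ((k * x : ℝ) : ℂ) * hankelH1 1 (k * x)
      + hankelH1 0 (k * (l - x)) - hankelH1 0 (k * x)) with hGdef
  have hG : ∀ x : ℝ, G (l - x) = -G x := by
    intro x
    simp only [hGdef, sub_sub_cancel]
    push_cast
    ring
  have hGzero : (∫ x in ε..(l-ε), G x) = 0 := by
    have h1 := hsub G
    have h2 : (∫ x in ε..(l-ε), G (l - x)) = ∫ x in ε..(l-ε), -G x :=
      intervalIntegral.integral_congr (fun x _ => hG x)
    rw [h2, intervalIntegral.integral_neg] at h1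
    linear_combination (-1/2 : ℂ) * h1
  have hGcont : ContinuousOn G (Set.uIcc ε (l-ε)) := by
    simp only [hGdef]
    apply ContinuousOn.mul continuousOn_const
    apply ContinuousOn.sub
    apply ContinuousOn.add
    apply ContinuousOn.sub
    · exact ((Complex.continuous_ofReal.comp (by fun_prop)).continuousOn).mul (hH' 1)
    · exact ((Complex.continuous_ofReal.comp (by fun_prop)).continuousOn).mul (hH 1)
    · exact hH' 0
    · exact hH 0
  have hgamma : (∫ x in ε..(l-ε), upsGamma k l x)
      = (∫ x in ε..(l-ε), upsBeta k l x) + ∫ x in ε..(l-ε), G x := by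
    rw [← intervalIntegral.integral_add hint1 hGcont.intervalIntegrable]
    apply intervalIntegral.integral_congr
    intro x _
    simp only [upsGamma, hGdef]
  rw [hgamma, hGzero, add_zero]
end
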